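/- Fix a monomial order ≺ on ℕ^p whose initial segments are finite. Let p ≥ 2, let h be an integer with h > 1, let k ∈ {1, …, p−1}, and let S be the submonoid of ℕ^p generated by {e₁, …, e_{p−1}, 2e_p, 3e_p, e_p + h·e_k} ∪ {e_p + e_i : i ∈ {1, …, p−1}, i ≠ k}. Then Fb(S) = e_p + (h−1)·e_k, and n(S) ≥ h. -/
import Mathlib


/-- `S ⊆ ℕ^p` contains `0` and is closed under addition. -/
def IsSubmonoidSet {p : ℕ} (S : Set (Fin p → ℕ)) : Prop :=
  (0 : Fin p → ℕ) ∈ S ∧ ∀ x ∈ S, ∀ y ∈ S, x + y ∈ S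

/-- `s` is a minimal generator of `S`: it is a nonzero element of `S` that is not a
sum of two nonzero elements of `S`. -/
def IsMinGen {p : ℕ} (S : Set (Fin p → ℕ)) (s : Fin p → ℕ) : Prop :=
  s ∈ S ∧ s ≠ 0 ∧ ∀ a ∈ S, ∀ b ∈ S, a ≠ 0 → b ≠ 0 → a + b ≠ s

/-- The (unique) minimal generating set of `S`. -/
def minGens {p : ℕ} (S : Set (Fin p → ℕ)) : Set (Fin p → ℕ) :=
  {s | IsMinGen S s}

/-- `prec` is (the strict part of) a monomial order on `ℕ^p` all of whose initial
segments are finite. -/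
def IsMonomialOrder {p : ℕ} (prec : (Fin p → ℕ) → (Fin p → ℕ) → Prop) : Prop :=
  (∀ a, ¬ prec a a) ∧
  (∀ a b c, prec a b → prec b c → prec a c) ∧
  (∀ a b, a ≠ b → prec a b ∨ prec b a) ∧
  (∀ a b c, prec a b → prec (a + c) (b + c)) ∧
  (∀ c, c ≠ (0 : Fin p → ℕ) → prec 0 c) ∧
  (∀ a, {b | prec b a}.Finite)

/-- The generating set
$\{e_1,…,e_{p-1},2e_p,3e_p,e_p+he_k\} ∪ \{e_p+e_i \mid i ∈ [p-1]\setminus\{k\}\}$,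
where the distinguished index $p$ corresponds to $⟨p-1,\_⟩ : \mathrm{Fin}\ p$. -/
def gens9 (p h : ℕ) (hp : 2 ≤ p) (k : Fin p) : Set (Fin p → ℕ) :=
  ({x | ∃ j : Fin p, j ≠ ⟨p - 1, by omega⟩ ∧ x = Pi.single j 1}
      ∪ {(2 : ℕ) • Pi.single (⟨p - 1, by omega⟩ : Fin p) 1,
          (3 : ℕ) • Pi.single (⟨p - 1, by omega⟩ : Fin p) 1,
          Pi.single (⟨p - 1, by omega⟩ : Fin p) 1 + h • Pi.single k 1})
    ∪ {x | ∃ j : Fin p, j ≠ ⟨p - 1, by omega⟩ ∧ j ≠ k ∧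
        x = Pi.single (⟨p - 1, by omega⟩ : Fin p) 1 + Pi.single j 1}

private lemma single_eq_smul' {p : ℕ} (j : Fin p) (n : ℕ) :
    Pi.single j n = n • (Pi.single j 1 : Fin p → ℕ) := by
  funext i; by_cases hi : i = j <;> simp [hi, Pi.single_apply]

private lemma add_tsub' {p : ℕ} (u x : Fin p → ℕ) (hle : ∀ j, u j ≤ x j) : u + (x - u) = x := by
  funext j; have := hle j; simp only [Pi.add_apply, Pi.sub_apply]; omega

private lemma mem1 {p : ℕ} (h : ℕ) (hp : 2 ≤ p) (k : Fin p) (x : Fin p → ℕ)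
    (hx : x ⟨p - 1, by omega⟩ = 0) : x ∈ AddSubmonoid.closure (gens9 p h hp k) := by
  have hxe : x = ∑ j : Fin p, Pi.single j (x j) := (Finset.univ_sum_single x).symm
  rw [hxe]
  refine AddSubmonoid.sum_mem _ fun j _ => ?_
  by_cases hj : j = (⟨p - 1, by omega⟩ : Fin p)
  · rw [hj, hx, Pi.single_zero]; exact AddSubmonoid.zero_mem _
  · rw [single_eq_smul' j (x j)]
    have hg : Pi.single j 1 ∈ gens9 p h hp k := Or.inl (Or.inl ⟨j, hj, rfl⟩)
    exact nsmul_mem (AddSubmonoid.subset_closure hg) (x j)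

private lemma mem_main {p : ℕ} (h : ℕ) (hp : 2 ≤ p) (k : Fin p) (hk : (k : ℕ) < p - 1)
    (x : Fin p → ℕ)
    (hx : ¬ (x ⟨p - 1, by omega⟩ = 1 ∧
      (∀ j : Fin p, j ≠ ⟨p - 1, by omega⟩ → j ≠ k → x j = 0) ∧ x k < h)) :
    x ∈ AddSubmonoid.closure (gens9 p h hp k) := by
  set P : Fin p := ⟨p - 1, by omega⟩ with hPdef
  have hkP : k ≠ P := Fin.ne_of_val_ne (show (k : ℕ) ≠ p - 1 by omega)
  rcases Nat.lt_or_ge (x P) 2 with h2 | h2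
  · rcases Nat.lt_or_ge (x P) 1 with h1 | h1
    · exact mem1 h hp k x (show x P = 0 by omega)
    · have hx1 : x P = 1 := by omega
      by_cases hB : ∀ j : Fin p, j ≠ P → j ≠ k → x j = 0
      · have hC : h ≤ x k := by by_contra hc; exact hx ⟨hx1, hB, by omega⟩
        set u := Pi.single P 1 + h • (Pi.single k 1 : Fin p → ℕ) with hu
        have huval : ∀ j, u j = (if j = P then 1 else 0) + (if j = k then h else 0) := by
          intro j
          rw [hu]
          simp only [Pi.add_apply, Pi.smul_apply, smul_eq_mul, Pi.single_apply]
          split_ifs <;> ring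
        have hle : ∀ j, u j ≤ x j := by
          intro j
          rw [huval]
          rcases eq_or_ne j P with rfl | h1'
          · rw [if_pos rfl, if_neg (Ne.symm hkP)]; omega
          · rcases eq_or_ne j k with rfl | h2'
            · rw [if_neg h1', if_pos rfl]; omega
            · rw [if_neg h1', if_neg h2']; omega
        rw [← add_tsub' u x hle]
        refine AddSubmonoid.add_mem _
          (AddSubmonoid.subset_closure (Set.mem_union_left _ (Set.mem_union_right _ (Set.mem_insert_of_mem _ (Set.mem_insert_of_mem _ rfl))))) ?_
        refine mem1 h hp k _ ?_
        show (x - u) P = 0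
        rw [Pi.sub_apply, huval, if_pos rfl, if_neg (Ne.symm hkP)]
        omega
      · push_neg at hB
        obtain ⟨j0, hj0P, hj0k, hj0⟩ := hB
        set u := Pi.single P 1 + (Pi.single j0 1 : Fin p → ℕ) with hu
        have huval : ∀ j, u j = (if j = P then 1 else 0) + (if j = j0 then 1 else 0) := by
          intro j
          rw [hu]
          simp only [Pi.add_apply, Pi.single_apply]
        have hle : ∀ j, u j ≤ x j := by
          intro j
          rw [huval]
          rcases eq_or_ne j P with rfl | h1'
          · rw [if_pos rfl, if_neg (Ne.symm hj0P)]; omega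
          · rcases eq_or_ne j j0 with rfl | h2'
            · rw [if_neg h1', if_pos rfl]; omega
            · rw [if_neg h1', if_neg h2']; omega
        rw [← add_tsub' u x hle]
        refine AddSubmonoid.add_mem _
          (AddSubmonoid.subset_closure (Or.inr ⟨j0, hj0P, hj0k, rfl⟩)) ?_
        refine mem1 h hp k _ ?_
        show (x - u) P = 0
        rw [Pi.sub_apply, huval, if_pos rfl, if_neg (Ne.symm hj0P)]
        omega
  · obtain ⟨a, b, hab⟩ : ∃ a b, x P = 2 * a + 3 * b := by
      rcases Nat.even_or_odd (x P) with ⟨c, hc⟩ | ⟨c, hc⟩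
      · exact ⟨c, 0, by omega⟩
      · exact ⟨c - 1, 1, by omega⟩
    set u := a • ((2 : ℕ) • (Pi.single P 1 : Fin p → ℕ))
        + b • ((3 : ℕ) • (Pi.single P 1 : Fin p → ℕ)) with hu
    have huval : ∀ j, u j = if j = P then 2 * a + 3 * b else 0 := by
      intro j
      rw [hu]
      simp only [Pi.add_apply, Pi.smul_apply, smul_eq_mul, Pi.single_apply]
      split_ifs <;> ring
    have hle : ∀ j, u j ≤ x j := by
      intro j
      rw [huval]
      rcases eq_or_ne j P with rfl | h1'
      · rw [if_pos rfl]; omega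
      · rw [if_neg h1']; omega
    rw [← add_tsub' u x hle]
    refine AddSubmonoid.add_mem _ (AddSubmonoid.add_mem _
      (nsmul_mem (AddSubmonoid.subset_closure
        (Set.mem_union_left _ (Set.mem_union_right _ (Set.mem_insert _ _)))) a)
      (nsmul_mem (AddSubmonoid.subset_closure
        (Set.mem_union_left _ (Set.mem_union_right _
          (Set.mem_insert_of_mem _ (Set.mem_insert _ _))))) b)) ?_
    refine mem1 h hp k _ ?_
    show (x - u) P = 0
    rw [Pi.sub_apply, huval, if_pos rfl]
    omega

private def notGap (p h : ℕ) (P k : Fin p) : AddSubmonoid (Fin p → ℕ) where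
  carrier := {x | ¬ (x P = 1 ∧ (∀ j : Fin p, j ≠ P → j ≠ k → x j = 0) ∧ x k < h)}
  zero_mem' := fun hx => by simpa using hx.1
  add_mem' := by
    intro a b ha hb hab
    obtain ⟨h1, h2, h3⟩ := hab
    simp only [Pi.add_apply] at h1 h3
    have h2' : ∀ j : Fin p, j ≠ P → j ≠ k → a j = 0 ∧ b j = 0 := by
      intro j hjP hjk
      have := h2 j hjP hjk
      simp only [Pi.add_apply] at this
      omega
    by_cases haP : a P = 1
    · exact ha ⟨haP, fun j hjP hjk => (h2' j hjP hjk).1, by omega⟩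
    · have hbP : b P = 1 := by omega
      exact hb ⟨hbP, fun j hjP hjk => (h2' j hjP hjk).2, by omega⟩

private lemma gens_sub (p h : ℕ) (hp : 2 ≤ p) (k : Fin p) (hk : (k : ℕ) < p - 1) :
    gens9 p h hp k ⊆ (notGap p h ⟨p - 1, by omega⟩ k : Set (Fin p → ℕ)) := by
  have hkP : k ≠ (⟨p - 1, by omega⟩ : Fin p) :=
    Fin.ne_of_val_ne (show (k : ℕ) ≠ p - 1 by omega)
  rintro x ((⟨j, hj, rfl⟩ | (rfl | rfl | rfl)) | ⟨j, hjP, hjk, rfl⟩)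
  · rintro ⟨c1, -, -⟩
    rw [Pi.single_eq_of_ne (fun e => hj e.symm)] at c1
    exact absurd c1 (by omega)
  · rintro ⟨c1, -, -⟩
    simp [Pi.single_eq_same] at c1
  · rintro ⟨c1, -, -⟩
    simp [Pi.single_eq_same] at c1
  · rintro ⟨-, -, c3⟩
    simp [Pi.single_eq_same, Pi.single_eq_of_ne hkP] at c3
  · rintro ⟨-, c2, -⟩
    have := c2 j hjP hjk
    simp [Pi.single_eq_same, Pi.single_eq_of_ne hjP] at this

theorem stmt11 {p : ℕ} (hp : 2 ≤ p)
    (prec : (Fin p → ℕ) → (Fin p → ℕ) → Prop) (hprec : IsMonomialOrder prec)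
    (h : ℕ) (hh : 1 < h) (k : Fin p) (hk : (k : ℕ) < p - 1) :
    (Pi.single (⟨p - 1, by omega⟩ : Fin p) 1 + (h - 1) • Pi.single k 1
        ∉ AddSubmonoid.closure (gens9 p h hp k)) ∧
    (∀ x : Fin p → ℕ, x ∉ AddSubmonoid.closure (gens9 p h hp k) →
      x ≠ Pi.single (⟨p - 1, by omega⟩ : Fin p) 1 + (h - 1) • Pi.single k 1 →
      prec x (Pi.single (⟨p - 1, by omega⟩ : Fin p) 1 + (h - 1) • Pi.single k 1)) ∧
    h ≤ {x : Fin p → ℕ | x ∈ AddSubmonoid.closure (gens9 p h hp k) ∧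
        prec x (Pi.single (⟨p - 1, by omega⟩ : Fin p) 1 + (h - 1) • Pi.single k 1)}.ncard := by
  obtain ⟨hirr, htrans, htot, hadd, hzero, hfin⟩ := hprec
  set P : Fin p := ⟨p - 1, by omega⟩ with hPdef
  have hkP : k ≠ P := Fin.ne_of_val_ne (show (k : ℕ) ≠ p - 1 by omega)
  set F := Pi.single P 1 + (h - 1) • (Pi.single k 1 : Fin p → ℕ) with hFdef
  have hFP : F P = 1 := by
    rw [hFdef]
    simp only [Pi.add_apply, Pi.smul_apply, smul_eq_mul, Pi.single_eq_same,
      Pi.single_eq_of_ne (Ne.symm hkP)]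
    omega
  have hFk : F k = h - 1 := by
    rw [hFdef]
    simp only [Pi.add_apply, Pi.smul_apply, smul_eq_mul, Pi.single_eq_same,
      Pi.single_eq_of_ne hkP]
    omega
  have hFj : ∀ j : Fin p, j ≠ P → j ≠ k → F j = 0 := by
    intro j h1 h2
    rw [hFdef]
    simp only [Pi.add_apply, Pi.smul_apply, smul_eq_mul,
      Pi.single_eq_of_ne h1, Pi.single_eq_of_ne h2]
    omega
  have part1 : F ∉ AddSubmonoid.closure (gens9 p h hp k) := by
    intro hmem
    have hng : F ∈ notGap p h P k :=
      AddSubmonoid.closure_le.mpr (gens_sub p h hp k hk) hmem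
    exact hng ⟨hFP, hFj, by rw [hFk]; omega⟩
  have part2 : ∀ x : Fin p → ℕ, x ∉ AddSubmonoid.closure (gens9 p h hp k) →
      x ≠ F → prec x F := by
    intro x hxmem hxF
    have hgap : x P = 1 ∧ (∀ j : Fin p, j ≠ P → j ≠ k → x j = 0) ∧ x k < h := by
      by_contra hc; exact hxmem (mem_main h hp k hk x hc)
    obtain ⟨g1, g2, g3⟩ := hgap
    have htne : x k ≠ h - 1 := by
      intro he
      apply hxF
      funext j
      rcases eq_or_ne j P with rfl | h1
      · rw [g1, hFP]
      · rcases eq_or_ne j k with rfl | h2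
        · rw [hFk, he]
        · rw [g2 j h1 h2, hFj j h1 h2]
    set c := (h - 1 - x k) • (Pi.single k 1 : Fin p → ℕ) with hcdef
    have hc0 : c ≠ 0 := by
      intro h0
      have := congrFun h0 k
      simp only [hcdef, Pi.smul_apply, smul_eq_mul, Pi.single_eq_same, Pi.zero_apply] at this
      omega
    have hFeq : F = c + x := by
      funext j
      rcases eq_or_ne j P with rfl | h1
      · rw [Pi.add_apply, hFP, g1]
        simp only [hcdef, Pi.smul_apply, smul_eq_mul, Pi.single_eq_of_ne (Ne.symm hkP)]
        omega
      · rcases eq_or_ne j k with rfl | h2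
        · rw [Pi.add_apply, hFk]
          simp only [hcdef, Pi.smul_apply, smul_eq_mul, Pi.single_eq_same]
          omega
        · rw [Pi.add_apply, hFj j h1 h2, g2 j h1 h2]
          simp [hcdef, Pi.single_eq_of_ne h2]
    have hpc := hadd 0 c x (hzero c hc0)
    rw [zero_add, ← hFeq] at hpc
    exact hpc
  refine ⟨part1, part2, ?_⟩
  set A := {x : Fin p → ℕ | x ∈ AddSubmonoid.closure (gens9 p h hp k) ∧ prec x F} with hA
  have hAfin : A.Finite := (hfin F).subset fun x hx => hx.2
  set f : ℕ → (Fin p → ℕ) := fun t => t • Pi.single k 1 with hf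
  have hinj : Function.Injective f := by
    intro s t hst
    have := congrFun hst k
    simpa [hf, Pi.single_eq_same] using this
  have hsub : ↑((Finset.range h).image f) ⊆ A := by
    intro y hy
    simp only [Finset.coe_image, Finset.coe_range, Set.mem_image, Set.mem_Iio] at hy
    obtain ⟨t, ht, rfl⟩ := hy
    refine ⟨?_, ?_⟩
    · refine mem1 h hp k _ ?_
      show f t P = 0
      simp [hf, Pi.single_eq_of_ne (Ne.symm hkP)]
    · set c := Pi.single P 1 + (h - 1 - t) • (Pi.single k 1 : Fin p → ℕ) with hcdef
      have hc0 : c ≠ 0 := by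
        intro h0
        have := congrFun h0 P
        simp only [hcdef, Pi.add_apply, Pi.smul_apply, smul_eq_mul, Pi.single_eq_same,
          Pi.single_eq_of_ne (Ne.symm hkP), Pi.zero_apply] at this
        omega
      have hFeq : F = c + f t := by
        funext j
        rcases eq_or_ne j P with rfl | h1
        · rw [Pi.add_apply, hFP]
          simp only [hcdef, hf, Pi.add_apply, Pi.smul_apply, smul_eq_mul, Pi.single_eq_same,
            Pi.single_eq_of_ne (Ne.symm hkP)]
          omega
        · rcases eq_or_ne j k with rfl | h2
          · rw [Pi.add_apply, hFk]
            simp only [hcdef, hf, Pi.add_apply, Pi.smul_apply, smul_eq_mul, Pi.single_eq_same,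
              Pi.single_eq_of_ne hkP]
            omega
          · rw [Pi.add_apply, hFj j h1 h2]
            simp [hcdef, hf, Pi.single_eq_of_ne h1, Pi.single_eq_of_ne h2]
      have hpc := hadd 0 c (f t) (hzero c hc0)
      rw [zero_add, ← hFeq] at hpc
      exact hpc
  calc h = ((Finset.range h).image f).card := by
        rw [Finset.card_image_of_injective _ hinj, Finset.card_range]
    _ = (↑((Finset.range h).image f) : Set (Fin p → ℕ)).ncard :=
        (Set.ncard_coe_finset _).symm
    _ ≤ A.ncard := Set.ncard_le_ncard hsub hAfin
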